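/- arXiv:1410.3901 — 5 statements merged into one kernel-verified Lean document; each statement's English description precedes it below -/
import Mathlib

section
/- Let V be a finite-dimensional complex vector space with V = V₁ ⊕ V₂, and let X, Y ∈ End(V) with Y ≠ 0, Y(V₁) ⊆ V₁, Y|_{V₂} = 0, and [Y, X] = 0. Define X₁ : V₁ → V₁ by X₁ = π_{V₁} ∘ X|_{V₁}, where π_{V₁} is the projection onto V₁ along V₂. Then X₁ and X have a common eigenvalue, i.e., σ(X₁) ∩ σ(X) ≠ ∅. -/
/-!
The range `W` of `Y` lies in `V₁`, because `V = V₁ ⊕ V₂` and `Y` kills `V₂` while preserving `V₁`.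
It is nonzero since `Y ≠ 0`, and `X`-invariant since `X` commutes with `Y`. An eigenvector `w` of
`X` inside `W` is then a vector of `V₁` with `X w = μ w`, so projecting to `V₁` changes nothing and
`X₁ w = μ w` as well.
-/

namespace LinearMap

variable {R M : Type*} [Ring R] [AddCommGroup M] [Module R M]

theorem range_le_of_mapsTo_of_eq_zero {V₁ V₂ : Submodule R M} (h : Codisjoint V₁ V₂)
    {Y : M →ₗ[R] M} (hY₁ : ∀ v ∈ V₁, Y v ∈ V₁) (hY₂ : ∀ v ∈ V₂, Y v = 0) :
    range Y ≤ V₁ := by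
  rw [range_eq_map, ← h.eq_top, Submodule.map_sup, sup_le_iff]
  constructor
  · rintro _ ⟨v, hv, rfl⟩
    exact hY₁ v hv
  · rintro _ ⟨v, hv, rfl⟩
    rw [hY₂ v hv]
    exact V₁.zero_mem

theorem mapsTo_range_of_commute {X Y : M →ₗ[R] M} (h : Y * X = X * Y) :
    ∀ w ∈ range Y, X w ∈ range Y :=
  Function.Semiconj.mapsTo_range (f := Y) (fun v => LinearMap.congr_fun h v)

end LinearMap

namespace Module.End

theorem exists_hasEigenvector_mem_of_mapsTo {K V : Type*} [Field K] [IsAlgClosed K]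
    [AddCommGroup V] [Module K V] [FiniteDimensional K V] {X : End K V} {W : Submodule K V}
    (hW : W ≠ ⊥) (hXW : ∀ w ∈ W, X w ∈ W) :
    ∃ μ : K, ∃ w ∈ W, X.HasEigenvector μ w := by
  have : Nontrivial W := Submodule.nontrivial_iff_ne_bot.mpr hW
  obtain ⟨μ, hμ⟩ := exists_eigenvalue (X.restrict hXW)
  obtain ⟨w, hw, hw0⟩ := hμ.exists_hasEigenvector
  refine ⟨μ, w, w.2, ?_, fun h => hw0 (Subtype.ext h)⟩
  rw [mem_eigenspace_iff] at hw ⊢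
  exact congrArg Subtype.val hw

theorem hasEigenvalue_compression {R V : Type*} [CommRing R] [AddCommGroup V] [Module R V]
    {V₁ V₂ : Submodule R V} (h : IsCompl V₁ V₂) {X : End R V} {X₁ : End R V₁}
    (hX₁ : ∀ v : V₁, X₁ v = V₁.projectionOnto V₂ h (X v)) {μ : R} {w : V} (hwV₁ : w ∈ V₁)
    (hw : X.HasEigenvector μ w) :
    X₁.HasEigenvalue μ := by
  refine hasEigenvalue_of_hasEigenvector (x := ⟨w, hwV₁⟩)
    ⟨?_, fun h => hw.2 (congrArg Subtype.val h)⟩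
  rw [mem_eigenspace_iff, hX₁, show X w = μ • w from mem_eigenspace_iff.mp hw.1, map_smul,
    Submodule.projectionOnto_apply_left h ⟨w, hwV₁⟩]

end Module.End

open Module.End

/-- **Proposition 4.12.**  Let `V = V₁ ⊕ V₂` be a finite-dimensional complex vector
space, and `X, Y ∈ End(V)` with `Y ≠ 0`, `Y(V₁) ⊆ V₁`, `Y|_{V₂} = 0` and `[Y,X] = 0`.
Let `X₁ : V₁ → V₁` be `π_{V₁} ∘ X|_{V₁}` where `π_{V₁}` is the projection onto `V₁`
along `V₂`.  Then `σ(X₁) ∩ σ(X) ≠ ∅`. -/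
theorem stmt1 (V : Type*) [AddCommGroup V] [Module ℂ V] [FiniteDimensional ℂ V]
    (V₁ V₂ : Submodule ℂ V) (hcompl : IsCompl V₁ V₂)
    (X Y : Module.End ℂ V) (hY0 : Y ≠ 0)
    (hY1 : ∀ v ∈ V₁, Y v ∈ V₁) (hY2 : ∀ v ∈ V₂, Y v = 0)
    (hcomm : Y * X = X * Y)
    (X₁ : Module.End ℂ V₁)
    (hX₁ : ∀ v : V₁, X₁ v = Submodule.linearProjOfIsCompl V₁ V₂ hcompl (X v)) :
    ∃ μ : ℂ, Module.End.HasEigenvalue X₁ μ ∧ Module.End.HasEigenvalue X μ := by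
  obtain ⟨μ, w, hwY, hw⟩ := exists_hasEigenvector_mem_of_mapsTo
    (mt LinearMap.range_eq_bot.mp hY0) (LinearMap.mapsTo_range_of_commute hcomm)
  have hwV₁ : w ∈ V₁ := LinearMap.range_le_of_mapsTo_of_eq_zero hcompl.codisjoint hY1 hY2 hwY
  exact ⟨μ, hasEigenvalue_compression hcompl hX₁ hwV₁ hw, hasEigenvalue_of_hasEigenvector hw⟩
end

section
/- Let x be an n×n complex matrix and let x_{n-1} denote its upper-left (n-1)×(n-1) submatrix. If there exists a nonzero (n-1)×(n-1) complex matrix Y such that the n×n matrix obtained by embedding Y into the upper-left corner (with zeros elsewhere) commutes with x, then x_{n-1} and x share a common eigenvalue. -/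
/-!
Since `Y' := cornerEmbed n Y` is nonzero and commutes with `x`, its range is a nonzero
`x`-invariant subspace, so it contains an eigenvector `v` of `x`, say `x v = μ v`. The last row
of `Y'` vanishes, hence so does the last coordinate of `v`; then the first `n` coordinates
of `x v = μ v` say that the truncation of `v`, which is nonzero, is a `μ`-eigenvector of `x_n`.
-/

/-- The embedding of `gl(n,ℂ)` into `gl(n+1,ℂ)` as the upper-left corner
(last row and column zero). -/
def cornerEmbed (n : ℕ) (Y : Matrix (Fin n) (Fin n) ℂ) :
    Matrix (Fin (n + 1)) (Fin (n + 1)) ℂ := fun i j =>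
  if h : (i : ℕ) < n ∧ (j : ℕ) < n then Y ⟨i, h.1⟩ ⟨j, h.2⟩ else 0

open Matrix

namespace Module.End

variable {K V : Type*} [Field K] [IsAlgClosed K] [AddCommGroup V] [Module K V]
  [FiniteDimensional K V]

theorem exists_hasEigenvector_mem_range_of_commute {f g : End K V} (hfg : Commute f g)
    (hg : g ≠ 0) : ∃ μ v, v ∈ LinearMap.range g ∧ f.HasEigenvector μ v := by
  have hinv : ∀ v ∈ LinearMap.range g, f v ∈ LinearMap.range g := by
    rintro _ ⟨u, rfl⟩
    exact ⟨f u, congrFun (congrArg DFunLike.coe hfg.eq.symm) u⟩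
  have : Nontrivial (LinearMap.range g) :=
    Submodule.nontrivial_iff_ne_bot.mpr (LinearMap.range_eq_bot.not.mpr hg)
  obtain ⟨μ, hμ⟩ := exists_eigenvalue (f.restrict hinv)
  obtain ⟨⟨v, hv⟩, hfv, hv0⟩ := hμ.exists_hasEigenvector
  refine ⟨μ, v, hv, mem_eigenspace_iff.mpr ?_, fun h => hv0 (Subtype.ext h)⟩
  simpa using congrArg Subtype.val (mem_eigenspace_iff.mp hfv)

end Module.End

namespace Matrix

variable {ι K : Type*} [Fintype ι] [DecidableEq ι] [Field K]

theorem mem_spectrum_of_mulVec_eq_smul {A : Matrix ι ι K} {μ : K} {v : ι → K} (hv : v ≠ 0)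
    (hAv : A *ᵥ v = μ • v) : μ ∈ spectrum K A := by
  rw [← spectrum_toLin']
  exact Module.End.HasEigenvalue.mem_spectrum
    (Module.End.hasEigenvalue_of_hasEigenvector ⟨Module.End.mem_eigenspace_iff.mpr hAv, hv⟩)

theorem exists_mulVec_eq_smul_of_commute [IsAlgClosed K] {A B : Matrix ι ι K}
    (hAB : Commute A B) (hB : B ≠ 0) :
    ∃ (μ : K) (u : ι → K), B *ᵥ u ≠ 0 ∧ A *ᵥ (B *ᵥ u) = μ • (B *ᵥ u) := by
  obtain ⟨μ, _, ⟨u, rfl⟩, hv, hv0⟩ := Module.End.exists_hasEigenvector_mem_range_of_commute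
    (hAB.map toLinAlgEquiv') (toLinAlgEquiv'.map_ne_zero_iff.mpr hB)
  exact ⟨μ, u, hv0, Module.End.mem_eigenspace_iff.mp hv⟩

theorem mulVec_castSucc_of_last_eq_zero {R : Type*} [NonUnitalNonAssocSemiring R] {n : ℕ}
    (x : Matrix (Fin (n + 1)) (Fin (n + 1)) R) {v : Fin (n + 1) → R} (hv : v (Fin.last n) = 0) :
    (x *ᵥ v) ∘ Fin.castSucc = x.submatrix Fin.castSucc Fin.castSucc *ᵥ (v ∘ Fin.castSucc) := by
  ext i
  simp [mulVec, dotProduct, Fin.sum_univ_castSucc, hv]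

end Matrix

@[simp]
theorem cornerEmbed_castSucc {n : ℕ} (Y : Matrix (Fin n) (Fin n) ℂ) (i j : Fin n) :
    cornerEmbed n Y i.castSucc j.castSucc = Y i j :=
  dif_pos ⟨i.isLt, j.isLt⟩

@[simp]
theorem cornerEmbed_last_left {n : ℕ} (Y : Matrix (Fin n) (Fin n) ℂ) (j : Fin (n + 1)) :
    cornerEmbed n Y (Fin.last n) j = 0 :=
  dif_neg (by simp)

theorem cornerEmbed_ne_zero {n : ℕ} {Y : Matrix (Fin n) (Fin n) ℂ} (hY : Y ≠ 0) :
    cornerEmbed n Y ≠ 0 := fun h => hY <| by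
  ext i j
  simpa using congrFun (congrFun h i.castSucc) j.castSucc

theorem cornerEmbed_mulVec_last {n : ℕ} (Y : Matrix (Fin n) (Fin n) ℂ) (u : Fin (n + 1) → ℂ) :
    (cornerEmbed n Y *ᵥ u) (Fin.last n) = 0 := by
  simp [mulVec, dotProduct]

/-- **Example 4.14.** Let `x ∈ gl(n+1,ℂ)` and let `x_{n}` denote its upper-left
`n × n` submatrix.  If there exists a nonzero `Y ∈ gl(n,ℂ)` whose embedding into the
upper-left corner of `gl(n+1,ℂ)` commutes with `x`, then `x_{n}` and `x` share a
common eigenvalue. -/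
theorem stmt2 (n : ℕ) (x : Matrix (Fin (n + 1)) (Fin (n + 1)) ℂ)
    (Y : Matrix (Fin n) (Fin n) ℂ) (hY : Y ≠ 0)
    (hcomm : cornerEmbed n Y * x = x * cornerEmbed n Y) :
    ∃ a : ℂ, a ∈ spectrum ℂ x ∧
      a ∈ spectrum ℂ (x.submatrix (Fin.castSucc : Fin n → Fin (n + 1)) Fin.castSucc) := by
  obtain ⟨μ, u, hv0, hxv⟩ :=
    exists_mulVec_eq_smul_of_commute hcomm.symm (cornerEmbed_ne_zero hY)
  set v := cornerEmbed n Y *ᵥ u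
  have hv_last : v (Fin.last n) = 0 := cornerEmbed_mulVec_last Y u
  have hv_top : v ∘ Fin.castSucc ≠ 0 := fun h => hv0 <| funext <|
    Fin.lastCases hv_last fun i => congrFun h i
  refine ⟨μ, mem_spectrum_of_mulVec_eq_smul hv0 hxv, mem_spectrum_of_mulVec_eq_smul hv_top ?_⟩
  rw [← mulVec_castSucc_of_last_eq_zero x hv_last, hxv]
  rfl
end

section
/- Let X be the (2l+1)×(2l+1) complex matrix with diagonal entries a₁,…,a_l, 0, -a_l,…,-a₁, with column l+1 having entries u₁,…,u_l above the diagonal zero and -u_l,…,-u₁ below in reversed order, and row l+1 having entries v₁,…,v_l before the diagonal and -v_l,…,-v₁ after (all other entries zero), where the a_j are nonzero and pairwise satisfy a_k ≠ ±a_j for k ≠ j. Then for each j, a_j is an eigenvalue of X if and only if u_j v_j = 0. -/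
/-- The matrix `X` of Equation (3.10): size `(2l+1) × (2l+1)`, with diagonal
`a₁, …, a_l, 0, -a_l, …, -a₁`, middle column entries `u₁, …, u_l` above the diagonal
zero and `-u_l, …, -u₁` below, and middle row entries `v₁, …, v_l` before the
diagonal and `-v_l, …, -v₁` after; all other entries zero.  Explicitly
`X e_j = a_j e_j + v_j e_0`, `X e_{-j} = -a_j e_{-j} - u_j e_0`,
`X e_0 = ∑ u_j e_j - v_j e_{-j}`. -/
def XiMatrix (l : ℕ) (a u v : Fin l → ℂ) :
    Matrix (Fin (2 * l + 1)) (Fin (2 * l + 1)) ℂ := fun i k =>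
  if h : (i : ℕ) < l ∧ (i : ℕ) = (k : ℕ) then a ⟨i, h.1⟩
  else if h : (i : ℕ) < l ∧ (k : ℕ) = l then u ⟨i, h.1⟩
  else if h : (i : ℕ) = l ∧ (k : ℕ) < l then v ⟨k, h.2⟩
  else if h : (i : ℕ) = l ∧ l < (k : ℕ) then
    -u ⟨2 * l - k, by have := k.isLt; omega⟩
  else if h : (k : ℕ) = l ∧ l < (i : ℕ) then
    -v ⟨2 * l - i, by have := i.isLt; omega⟩
  else if h : l < (i : ℕ) ∧ (i : ℕ) = (k : ℕ) then
    -a ⟨2 * l - i, by have := i.isLt; omega⟩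
  else 0

/-! `X - a_j` is an arrowhead matrix: its nonzero entries lie on the diagonal and in the middle
row and column. By the hypotheses on the `a_k`, its diagonal vanishes only at `e_j` and `e_0`.
A kernel vector of such a matrix either has a nonzero `e_0`-coordinate, and then row `j` forces
`u_j = 0`, or it is a multiple of `e_j`, and then the middle row forces `v_j = 0`. Conversely,
`u_j = 0` (resp. `v_j = 0`) kills row (resp. column) `j` of `X - a_j`. -/

namespace Matrix

variable {ι R : Type*}

def IsArrowhead [Zero R] (M : Matrix ι ι R) (m : ι) : Prop :=
  ∀ i k, i ≠ k → i ≠ m → k ≠ m → M i k = 0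

variable [Fintype ι]

theorem IsArrowhead.algebraMap_sub [DecidableEq ι] [CommRing R] {M : Matrix ι ι R} {m : ι}
    (hM : M.IsArrowhead m) (r : R) : (algebraMap R (Matrix ι ι R) r - M).IsArrowhead m := by
  intro i k hik hi hk
  rw [sub_apply, algebraMap_matrix_apply, if_neg hik, hM i k hik hi hk, sub_zero]

theorem IsArrowhead.mulVec_apply [CommRing R] {M : Matrix ι ι R} {m : ι}
    (hM : M.IsArrowhead m) (w : ι → R) {i : ι} (hi : i ≠ m) :
    (M *ᵥ w) i = M i i * w i + M i m * w m :=
  Fintype.sum_eq_add i m hi fun k hk => by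
    show M i k * w k = 0
    rw [hM i k (Ne.symm hk.1) hi hk.2, zero_mul]

theorem IsArrowhead.det_eq_zero_iff [DecidableEq ι] [CommRing R] [IsDomain R]
    {M : Matrix ι ι R} {m p : ι} (hM : M.IsArrowhead m) (hpm : p ≠ m) (hpp : M p p = 0)
    (hdiag : ∀ i, i ≠ p → i ≠ m → M i i ≠ 0) :
    M.det = 0 ↔ M p m * M m p = 0 := by
  constructor
  · rw [← exists_mulVec_eq_zero_iff]
    rintro ⟨w, hw0, hMw⟩
    by_cases hwm : w m = 0
    · have hsupp : ∀ i, i ≠ p → w i = 0 := by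
        intro i hip
        by_cases him : i = m
        · rwa [him]
        · have hrow := congrFun hMw i
          rw [hM.mulVec_apply w him, hwm, mul_zero, add_zero] at hrow
          exact (mul_eq_zero.1 hrow).resolve_left (hdiag i hip him)
      have hwp : w p ≠ 0 := fun h => hw0 <| funext fun i =>
        if hip : i = p then hip ▸ h else hsupp i hip
      have hrow : M m p * w p = 0 :=
        calc M m p * w p = (M *ᵥ w) m :=
              (Fintype.sum_eq_single (f := fun k => M m k * w k) p fun k hk => by
                rw [hsupp k hk, mul_zero]).symm
          _ = 0 := congrFun hMw m
      exact mul_eq_zero_of_right _ ((mul_eq_zero.1 hrow).resolve_right hwp)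
    · have hrow := congrFun hMw p
      rw [hM.mulVec_apply w hpm, hpp, zero_mul, zero_add] at hrow
      exact mul_eq_zero_of_left ((mul_eq_zero.1 hrow).resolve_right hwm) _
  · intro h
    rcases mul_eq_zero.1 h with h | h
    · refine det_eq_zero_of_row_eq_zero p fun k => ?_
      by_cases hkp : k = p
      · rwa [hkp]
      by_cases hkm : k = m
      · rwa [hkm]
      exact hM p k (Ne.symm hkp) hpm hkm
    · refine det_eq_zero_of_column_eq_zero p fun i => ?_
      by_cases hip : i = p
      · rwa [hip]
      by_cases him : i = m
      · rwa [him]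
      exact hM i p hip him hpm

end Matrix

section XiMatrix

variable {l : ℕ} {a u v : Fin l → ℂ}

/-- The index of the basis vector `e_j` of the paper. -/
def xiPos (j : Fin l) : Fin (2 * l + 1) := ⟨j, by omega⟩

/-- The index of the basis vector `e_0` of the paper. -/
def xiMid (l : ℕ) : Fin (2 * l + 1) := ⟨l, by omega⟩

theorem xiPos_ne_xiMid (j : Fin l) : xiPos j ≠ xiMid l := by
  simp only [xiPos, xiMid, ne_eq, Fin.ext_iff]
  omega

theorem xiMatrix_isArrowhead : (XiMatrix l a u v).IsArrowhead (xiMid l) := by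
  intro i k hik hi hk
  simp only [ne_eq, Fin.ext_iff, xiMid] at hik hi hk
  unfold XiMatrix
  split_ifs <;> first | rfl | omega

theorem xiMatrix_xiPos_xiPos (j : Fin l) : XiMatrix l a u v (xiPos j) (xiPos j) = a j := by
  simp [XiMatrix, xiPos]

theorem xiMatrix_xiPos_xiMid (j : Fin l) : XiMatrix l a u v (xiPos j) (xiMid l) = u j := by
  simp [XiMatrix, xiPos, xiMid, j.isLt.ne]

theorem xiMatrix_xiMid_xiPos (j : Fin l) : XiMatrix l a u v (xiMid l) (xiPos j) = v j := by
  simp [XiMatrix, xiPos, xiMid]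

theorem xiMatrix_diag_cases (i : Fin (2 * l + 1)) :
    (∃ k, i = xiPos k ∧ XiMatrix l a u v i i = a k) ∨ XiMatrix l a u v i i = 0 ∨
      ∃ k, XiMatrix l a u v i i = -a k := by
  unfold XiMatrix
  split_ifs
  · exact Or.inl ⟨_, Fin.ext rfl, rfl⟩
  all_goals first | omega | exact Or.inr (Or.inl rfl) | exact Or.inr (Or.inr ⟨_, rfl⟩)

theorem xiMatrix_diag_ne (ha0 : ∀ j, a j ≠ 0)
    (hdist : ∀ j k, j ≠ k → a j ≠ a k ∧ a j ≠ -a k) {j : Fin l} {i : Fin (2 * l + 1)}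
    (hi : i ≠ xiPos j) : XiMatrix l a u v i i ≠ a j := by
  rcases xiMatrix_diag_cases (u := u) (v := v) i with ⟨k, rfl, h⟩ | h | ⟨k, h⟩ <;> rw [h]
  · have hkj : k ≠ j := fun h => hi (h ▸ rfl)
    exact (hdist k j hkj).1
  · exact (ha0 j).symm
  · by_cases hkj : k = j
    · subst hkj
      intro h
      exact ha0 k (by linear_combination -h / 2)
    · exact fun h => (hdist j k (Ne.symm hkj)).2 h.symm

end XiMatrix

/-- **Equation (3.12).**  With the `a_j` nonzero and satisfying `a_k ≠ ± a_j` for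
`k ≠ j`, the scalar `a_j` is an eigenvalue of the matrix `X` above if and only if
`u_j v_j = 0`. -/
theorem stmt8 (l : ℕ) (a u v : Fin l → ℂ)
    (ha0 : ∀ j, a j ≠ 0)
    (hdist : ∀ j k, j ≠ k → a j ≠ a k ∧ a j ≠ -a k)
    (j : Fin l) :
    a j ∈ spectrum ℂ (XiMatrix l a u v) ↔ u j * v j = 0 := by
  set M := algebraMap ℂ _ (a j) - XiMatrix l a u v
  have hM : M.IsArrowhead (xiMid l) := Matrix.IsArrowhead.algebraMap_sub xiMatrix_isArrowhead (a j)
  have hpp : M (xiPos j) (xiPos j) = 0 := by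
    simp [M, Matrix.algebraMap_matrix_apply, xiMatrix_xiPos_xiPos]
  have hdiag : ∀ i, i ≠ xiPos j → i ≠ xiMid l → M i i ≠ 0 := fun i hi _ => by
    simpa [M, Matrix.algebraMap_matrix_apply, sub_eq_zero] using
      (xiMatrix_diag_ne (u := u) (v := v) ha0 hdist hi).symm
  rw [spectrum.mem_iff, Matrix.isUnit_iff_isUnit_det, isUnit_iff_ne_zero, not_not,
    hM.det_eq_zero_iff (xiPos_ne_xiMid j) hpp hdiag]
  simp [M, Matrix.algebraMap_matrix_apply, xiPos_ne_xiMid, (xiPos_ne_xiMid j).symm,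
    xiMatrix_xiPos_xiMid, xiMatrix_xiMid_xiPos]
end

section
/- Let g be a complex semisimple Lie algebra with homogeneous generators f₁,…,f_r of ℂ[g]^G of positive degree. If x ∈ g satisfies f_i(x) = 0 for all i = 1,…,r, then x is nilpotent. -/
/-!
On the zero locus of the `f_i`, every polynomial in the `f_i` takes the same value as at `0`,
because the `f_i` are homogeneous of positive degree. The functions `y ↦ tr((ad y)^k)` are
invariant polynomials, hence polynomials in the `f_i`, so `tr((ad x)^k) = 0` for all `k ≥ 1`.
These traces are the power sums `∑ m_μ μ^k` over the eigenvalues `μ` of `ad x` with their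
multiplicities `m_μ`, and their vanishing forces every eigenvalue to be `0` by a Vandermonde
argument in characteristic zero, so `ad x` is nilpotent.
-/

open MvPolynomial

/-- Evaluation of a polynomial function on a Lie algebra `L` at a point, in the
coordinates of a basis `b`. -/
noncomputable def polyEvalAt {L : Type*} [AddCommGroup L] [Module ℂ L] {n : ℕ}
    (b : Module.Basis (Fin n) ℂ L) (f : MvPolynomial (Fin n) ℂ) (x : L) : ℂ :=
  MvPolynomial.eval (fun j => b.repr x j) f

/-- Directional derivative `df(x)(y) = ∑_j (∂f/∂x_j)(x) · y_j` of a polynomial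
function on `L` in the coordinates of a basis `b`. -/
noncomputable def polyDiff {L : Type*} [AddCommGroup L] [Module ℂ L] {n : ℕ}
    (b : Module.Basis (Fin n) ℂ L) (f : MvPolynomial (Fin n) ℂ) (x y : L) : ℂ :=
  ∑ j : Fin n,
    MvPolynomial.eval (fun k => b.repr x k) (MvPolynomial.pderiv j f) * b.repr y j

open Module

lemma Finset.eq_zero_of_forall_sum_mul_pow_succ_eq_zero {R : Type*} [CommRing R] [IsDomain R]
    (s : Finset R) (c : R → R) (h : ∀ k : ℕ, ∑ μ ∈ s, c μ * μ ^ (k + 1) = 0) :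
    ∀ μ ∈ s, c μ * μ = 0 := by
  set e := s.equivFin
  have hv := Matrix.eq_zero_of_forall_pow_sum_mul_pow_eq_zero (f := fun j ↦ (e.symm j : R))
    (v := fun j ↦ c (e.symm j) * e.symm j) (Subtype.val_injective.comp e.symm.injective)
    fun i ↦ by
      rw [← h i, ← s.sum_coe_sort, ← e.symm.sum_comp]
      exact Fintype.sum_congr _ _ fun j ↦ by ring
  intro μ hμ
  simpa using congrFun hv (e ⟨μ, hμ⟩)

section TracePowers

variable {K V : Type*} [Field K] [AddCommGroup V] [Module K V] [FiniteDimensional K V]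

lemma LinearMap.trace_pow_eq_of_isNilpotent_sub_algebraMap {ψ : End K V} {μ : K}
    (h : IsNilpotent (ψ - algebraMap K (End K V) μ)) (m : ℕ) :
    trace K V (ψ ^ m) = μ ^ m * finrank K V := by
  induction m with
  | zero => simp
  | succ m ih =>
    rw [pow_succ, End.mul_eq_comp,
      trace_comp_eq_mul_of_commute_of_isNilpotent μ ((Commute.refl ψ).pow_left m) h, ih, pow_succ]
    ring

lemma Module.End.finite_maxGenEigenspace_ne_bot (φ : End K V) :
    {μ | φ.maxGenEigenspace μ ≠ ⊥}.Finite :=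
  WellFoundedGT.finite_ne_bot_of_iSupIndep φ.independent_maxGenEigenspace

variable [IsAlgClosed K]

lemma LinearMap.trace_pow_eq_sum_finrank_maxGenEigenspace (φ : End K V) (m : ℕ) :
    trace K V (φ ^ m) = ∑ μ ∈ φ.finite_maxGenEigenspace_ne_bot.toFinset,
      finrank K (φ.maxGenEigenspace μ) * μ ^ m := by
  classical
  rw [trace_eq_sum_trace_restrict' (DirectSum.isInternal_submodule_of_iSupIndep_of_iSup_eq_top
    φ.independent_maxGenEigenspace φ.iSup_maxGenEigenspace_eq_top)
    φ.finite_maxGenEigenspace_ne_bot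
    fun μ ↦ φ.mapsTo_maxGenEigenspace_of_comm ((Commute.refl φ).pow_right m) μ]
  refine Finset.sum_congr rfl fun μ _ ↦ ?_
  rw [← End.pow_restrict m (φ.mapsTo_maxGenEigenspace_of_comm rfl μ), trace_pow_eq_of_isNilpotent_sub_algebraMap
    (φ.isNilpotent_restrict_maxGenEigenspace_sub_algebraMap μ), mul_comm]

lemma LinearMap.isNilpotent_of_forall_trace_pow_succ_eq_zero [CharZero K] (φ : End K V)
    (h : ∀ k : ℕ, trace K V (φ ^ (k + 1)) = 0) : IsNilpotent φ := by
  have heigen : ∀ μ, φ.maxGenEigenspace μ ≠ ⊥ → μ = 0 := by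
    intro μ hμ
    have hcμ := Finset.eq_zero_of_forall_sum_mul_pow_succ_eq_zero _ _
      (fun k ↦ (trace_pow_eq_sum_finrank_maxGenEigenspace φ (k + 1)).symm.trans (h k)) μ
      (φ.finite_maxGenEigenspace_ne_bot.mem_toFinset.mpr hμ)
    have : Nontrivial (φ.maxGenEigenspace μ) := Submodule.nontrivial_iff_ne_bot.mpr hμ
    simpa [finrank_pos.ne'] using hcμ
  have htop : φ.maxGenEigenspace 0 = ⊤ := by
    rw [eq_top_iff, ← φ.iSup_maxGenEigenspace_eq_top]
    refine iSup_le fun μ ↦ ?_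
    by_cases hμ : φ.maxGenEigenspace μ = ⊥
    · simp [hμ]
    · rw [heigen μ hμ]
  refine ((charpoly_nilpotent_tfae φ).out 0 2).mpr fun v ↦ ?_
  obtain ⟨k, hk⟩ := (φ.mem_maxGenEigenspace 0 v).mp (htop ▸ Submodule.mem_top)
  exact ⟨k, by simpa using hk⟩

end TracePowers

namespace Matrix

variable {R A ι : Type*} [CommRing R] [CommRing A] [Algebra R A] [Fintype ι]

lemma map_derivation_mul (D : Derivation R A A) (P Q : Matrix ι ι A) :
    (P * Q).map D = P.map D * Q + P * Q.map D := by
  ext i k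
  simp only [map_apply, add_apply, mul_apply, map_sum, ← Finset.sum_add_distrib, D.leibniz,
    smul_eq_mul]
  exact Finset.sum_congr rfl fun l _ ↦ by ring

variable [DecidableEq ι]

lemma trace_pow_mul_map_derivation_pow_succ (D : Derivation R A A) (M : Matrix ι ι A) (k : ℕ) :
    ∀ m : ℕ, (M ^ m * (M ^ (k + 1)).map D).trace = (k + 1) • (M ^ (m + k) * M.map D).trace := by
  induction k with
  | zero => simp
  | succ k ih =>
    intro m
    rw [pow_succ' M (k + 1), map_derivation_mul, Matrix.mul_add, trace_add, ← Matrix.mul_assoc,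
      trace_mul_cycle, ← pow_add, ← Matrix.mul_assoc, ← pow_succ, ih (m + 1), succ_nsmul,
      show m + 1 + k = m + (k + 1) by ring, add_comm (k + 1) m]
    simp only [add_nsmul, one_nsmul]
    abel

lemma trace_map_derivation_pow_succ (D : Derivation R A A) (M : Matrix ι ι A) (k : ℕ) :
    ((M ^ (k + 1)).map D).trace = (k + 1) • (M ^ k * M.map D).trace := by
  simpa using trace_pow_mul_map_derivation_pow_succ D M k 0

lemma trace_pow_mul_commutator_eq_zero (P Q : Matrix ι ι A) (k : ℕ) :
    (P ^ k * (Q * P - P * Q)).trace = 0 := by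
  rw [Matrix.mul_sub, trace_sub, ← Matrix.mul_assoc, trace_mul_comm, ← Matrix.mul_assoc,
    ← pow_succ', ← Matrix.mul_assoc, ← pow_succ, sub_self]

end Matrix

lemma MvPolynomial.eval_eq_eval_of_mem_adjoin {σ R : Type*} [CommRing R]
    {s : Set (MvPolynomial σ R)} {c c' : σ → R} (hs : ∀ p ∈ s, eval c p = eval c' p)
    {p : MvPolynomial σ R} (hp : p ∈ Algebra.adjoin R s) : eval c p = eval c' p := by
  simpa using (AlgHom.eqOn_adjoin_iff (φ := aeval c) (ψ := aeval c')).mpr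
    (fun q hq ↦ by simpa using hs q hq) hp

lemma MvPolynomial.IsHomogeneous.eval_zero {σ R : Type*} [CommRing R] {p : MvPolynomial σ R}
    {d : ℕ} (hp : p.IsHomogeneous d) (hd : d ≠ 0) : eval 0 p = 0 := by
  rw [MvPolynomial.eval_zero, constantCoeff_eq]
  exact hp.coeff_eq_zero (by simpa using hd.symm)

section GenericMatrix

variable {L : Type*} [AddCommGroup L] [Module ℂ L] {n : ℕ} (b : Basis (Fin n) ℂ L)
  {ι : Type*} (T : L →ₗ[ℂ] Matrix ι ι ℂ)

noncomputable def genericMatrix : Matrix ι ι (MvPolynomial (Fin n) ℂ) :=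
  ∑ l, (X l : MvPolynomial (Fin n) ℂ) • (T (b l)).map C

lemma map_pderiv_genericMatrix (j : Fin n) :
    (genericMatrix b T).map (pderiv j) = (T (b j)).map C := by
  ext i k
  simp [genericMatrix, Matrix.sum_apply, Pi.single_apply]

lemma map_eval_genericMatrix (y : L) :
    (genericMatrix b T).map (eval (b.repr y ·)) = T y := by
  ext i k
  conv_rhs => rw [← b.sum_repr y, map_sum]
  simp [genericMatrix, Matrix.sum_apply, mul_comm]

variable [Fintype ι] [DecidableEq ι]

lemma polyEvalAt_trace_genericMatrix_pow (y : L) (m : ℕ) :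
    polyEvalAt b ((genericMatrix b T) ^ m).trace y = (T y ^ m).trace := by
  rw [polyEvalAt, AddMonoidHom.map_trace, Matrix.map_pow, map_eval_genericMatrix]

lemma polyDiff_trace_genericMatrix_pow_succ (y z : L) (k : ℕ) :
    polyDiff b ((genericMatrix b T) ^ (k + 1)).trace y z = (k + 1) * (T y ^ k * T z).trace := by
  have hpderiv (j : Fin n) : eval (b.repr y ·) (pderiv j ((genericMatrix b T) ^ (k + 1)).trace)
      = (k + 1) * (T y ^ k * T (b j)).trace := by
    rw [AddMonoidHom.map_trace, Matrix.trace_map_derivation_pow_succ, map_nsmul,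
      AddMonoidHom.map_trace, Matrix.map_mul, Matrix.map_pow, map_eval_genericMatrix,
      map_pderiv_genericMatrix, nsmul_eq_mul]
    simp [Matrix.map_map, Function.comp_def]
  conv_rhs => rw [← b.sum_repr z]
  simp only [polyDiff, hpderiv, map_sum, map_smul, Matrix.trace_sum, Finset.mul_sum,
    Matrix.mul_smul, Matrix.trace_smul, smul_eq_mul]
  exact Finset.sum_congr rfl fun j _ ↦ by ring

end GenericMatrix

lemma polyDiff_trace_genericMatrix_pow_succ_lie_eq_zero {L : Type*} [LieRing L]
    [LieAlgebra ℂ L] {n : ℕ} (b : Basis (Fin n) ℂ L) {ι : Type*} [Fintype ι] [DecidableEq ι]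
    (T : L →ₗ[ℂ] Matrix ι ι ℂ) (hT : ∀ y z, T ⁅y, z⁆ = T y * T z - T z * T y) (k : ℕ) (y z : L) :
    polyDiff b ((genericMatrix b T) ^ (k + 1)).trace y ⁅z, y⁆ = 0 := by
  rw [polyDiff_trace_genericMatrix_pow_succ, hT, Matrix.trace_pow_mul_commutator_eq_zero, mul_zero]

theorem stmt14_general (L : Type*) [LieRing L] [LieAlgebra ℂ L]
    (n r : ℕ) (b : Module.Basis (Fin n) ℂ L)
    (f : Fin r → MvPolynomial (Fin n) ℂ) (d : Fin r → ℕ)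
    (hpos : ∀ i, 0 < d i)
    (hhom : ∀ i, (f i).IsHomogeneous (d i))
    (hgen : ∀ g : MvPolynomial (Fin n) ℂ,
      (∀ x z : L, polyDiff b g x ⁅z, x⁆ = 0) → g ∈ Algebra.adjoin ℂ (Set.range f))
    (x : L) (hx : ∀ i, polyEvalAt b (f i) x = 0) :
    IsNilpotent (LieAlgebra.ad ℂ L x) := by
  have : FiniteDimensional ℂ L := .of_basis b
  let T : L →ₗ[ℂ] Matrix (Fin n) (Fin n) ℂ :=
    (LinearMap.toMatrix b b).toLinearMap ∘ₗ (LieAlgebra.ad ℂ L : L →ₗ[ℂ] End ℂ L)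
  have hT (y z : L) : T ⁅y, z⁆ = T y * T z - T z * T y := by
    simp only [T, LinearMap.comp_apply, LinearEquiv.coe_coe, ← LinearMap.toMatrix_mul, ← map_sub]
    congr 1
    ext w
    simp
  have hadjoin_eval (p) (hp : p ∈ Algebra.adjoin ℂ (Set.range f)) :
      polyEvalAt b p x = polyEvalAt b p 0 := by
    refine eval_eq_eval_of_mem_adjoin ?_ hp
    rintro _ ⟨i, rfl⟩
    have h0 : polyEvalAt b (f i) 0 = 0 := by
      simpa [polyEvalAt] using (hhom i).eval_zero (hpos i).ne'
    exact (hx i).trans h0.symm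
  refine LinearMap.isNilpotent_of_forall_trace_pow_succ_eq_zero _ fun k ↦ ?_
  have htrace := hadjoin_eval _
    (hgen _ (polyDiff_trace_genericMatrix_pow_succ_lie_eq_zero b T hT k))
  rw [polyEvalAt_trace_genericMatrix_pow, polyEvalAt_trace_genericMatrix_pow, map_zero,
    zero_pow k.succ_ne_zero, Matrix.trace_zero] at htrace
  rw [LinearMap.trace_eq_matrix_trace ℂ b, ← LinearMap.toMatrix_pow]
  exact htrace

/-- **(Kostant, Proposition 16 of [Kostant63].)**  Let `L` be a complex semisimple
Lie algebra with homogeneous generators `f₁, …, f_r` of the invariant ring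
`ℂ[L]^G`, all of positive degree.  If `x ∈ L` satisfies `f_i(x) = 0` for all
`i = 1, …, r`, then `x` is nilpotent. -/
theorem stmt14 (L : Type*) [LieRing L] [LieAlgebra ℂ L] [FiniteDimensional ℂ L]
    [LieAlgebra.IsSemisimple ℂ L]
    (n r : ℕ) (b : Module.Basis (Fin n) ℂ L)
    (f : Fin r → MvPolynomial (Fin n) ℂ) (d : Fin r → ℕ)
    (hpos : ∀ i, 0 < d i)
    (hhom : ∀ i, (f i).IsHomogeneous (d i))
    (hinvf : ∀ (i : Fin r) (x z : L), polyDiff b (f i) x ⁅z, x⁆ = 0)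
    (hgen : ∀ g : MvPolynomial (Fin n) ℂ,
      (∀ x z : L, polyDiff b g x ⁅z, x⁆ = 0) → g ∈ Algebra.adjoin ℂ (Set.range f))
    (x : L) (hx : ∀ i, polyEvalAt b (f i) x = 0) :
    IsNilpotent (LieAlgebra.ad ℂ L x) :=
  stmt14_general L n r b f d hpos hhom hgen x hx
end

section
/- Let x ∈ so(n,ℂ) (skew with respect to the antidiagonal form, n = 2l or 2l+1 with the embedded so(n-1,ℂ) as the θ-fixed subalgebra) and write x = x_k + x_p with x_k ∈ so(n-1,ℂ). If the centralizer of x_k in so(n-1,ℂ) intersects the centralizer of x in so(n,ℂ) nontrivially, then x and x_k share a common eigenvalue (where for n odd x_k is regarded as acting on the (n-1)-dimensional θ-fixed subspace of ℂ^n). -/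
/-- The `n × n` matrix `S_n` with ones down the antidiagonal, defining the symmetric
bilinear form whose skew matrices form `so(n,ℂ)`. -/
def antidiagForm (n : ℕ) : Matrix (Fin n) (Fin n) ℂ := fun i j =>
  if (i : ℕ) + (j : ℕ) + 1 = n then 1 else 0

/-- The matrix `T` implementing the involution `θ` of `so(n,ℂ)` with fixed
subalgebra `so(n-1,ℂ)` (Sections 2.1–2.2):  for `n = 2l+1` odd, `T` is diagonal with
`-1` in the middle entry `e_0` and `1` elsewhere (`θ = Ad(t)`);  for `n = 2l` even,
`T` is the permutation matrix exchanging the two middle basis vectors `e_l, e_{-l}`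
(the diagram automorphism). -/
def thetaMat (n : ℕ) : Matrix (Fin n) (Fin n) ℂ := fun i j =>
  if n % 2 = 1 then
    (if i = j then (if 2 * (i : ℕ) + 1 = n then -1 else 1) else 0)
  else
    (if ((i : ℕ) + 1 = n / 2 ∧ (j : ℕ) = n / 2) ∨
        ((i : ℕ) = n / 2 ∧ (j : ℕ) + 1 = n / 2) then 1
     else if i = j ∧ (i : ℕ) + 1 ≠ n / 2 ∧ (i : ℕ) ≠ n / 2 then 1
     else 0)

/-- The projection `x ↦ x_k` of `so(n,ℂ)` onto the `θ`-fixed subalgebra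
`k = so(n-1,ℂ)`, along the `(-1)`-eigenspace of `θ`:  `x_k = (x + T x T)/2`. -/
noncomputable def kProj (n : ℕ) (x : Matrix (Fin n) (Fin n) ℂ) :
    Matrix (Fin n) (Fin n) ℂ :=
  (2⁻¹ : ℂ) • (x + thetaMat n * x * thetaMat n)

/-!
A nonzero `y` in both centralizers maps into the `θ`-fixed subspace. Indeed `1 - θ` has rank one,
`1 - θ = u vᵀ` with `u` non-isotropic for the form; since `y` commutes with `θ` it preserves the
line `ℂ u`, and skewness of `y` forces its eigenvalue on `u` to vanish, so `y (1 - θ) = 0`, i.e.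
`y = y θ = θ y`. On the range of `y`, which is `x`-invariant because `y` commutes with `x`, the
projection `x_k` agrees with `x`; an eigenvector of `x` in that range is therefore a common
eigenvector of `x` and `x_k`, fixed by `θ`.
-/

open Matrix

namespace Matrix

variable {K ι : Type*} [Field K] [Fintype ι]

theorem eq_zero_of_mulVec_eq_smul_of_isSkew [NeZero (2 : K)] {S y : Matrix ι ι K}
    (hy : yᵀ * S + S * y = 0) {u : ι → K} (hu : u ⬝ᵥ S *ᵥ u ≠ 0) {c : K}
    (hyu : y *ᵥ u = c • u) : c = 0 := by
  have h := congrArg (fun M => u ⬝ᵥ M *ᵥ u) hy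
  simp only [add_mulVec, dotProduct_add, zero_mulVec, dotProduct_zero, ← mulVec_mulVec,
    dotProduct_mulVec u yᵀ, vecMul_transpose, hyu, mulVec_smul, dotProduct_smul,
    smul_dotProduct, smul_eq_mul] at h
  have h' : (2 * c) * (u ⬝ᵥ S *ᵥ u) = 0 := by linear_combination h
  simpa [two_ne_zero, hu] using h'

section Reflection

variable [DecidableEq ι] {T : Matrix ι ι K} {u v : ι → K}

theorem mul_self_eq_one_of_one_sub_eq_vecMulVec (hT : 1 - T = vecMulVec u v)
    (hvu : v ⬝ᵥ u = 2) : T * T = 1 := by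
  have hP : (1 - T) * (1 - T) = (1 - T) + (1 - T) := by
    rw [hT, vecMulVec_mul_vecMulVec, hvu, two_smul, vecMulVec_add]
  calc T * T = 1 - ((1 - T) + (1 - T)) + (1 - T) * (1 - T) := by noncomm_ring
    _ = 1 := by rw [hP, sub_add_cancel]

theorem mul_eq_self_of_one_sub_eq_vecMulVec [NeZero (2 : K)] (hT : 1 - T = vecMulVec u v)
    (hvu : v ⬝ᵥ u = 2) {S y : Matrix ι ι K} (hu : u ⬝ᵥ S *ᵥ u ≠ 0)
    (hy : yᵀ * S + S * y = 0) (hTy : T * y * T = y) : y * T = y := by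
  have hcomm : (1 - T) * y = y * (1 - T) := by
    have hTT := mul_self_eq_one_of_one_sub_eq_vecMulVec hT hvu
    have hTy' : T * y = y * T := by
      calc T * y = T * y * T * T := by rw [Matrix.mul_assoc _ T T, hTT, Matrix.mul_one]
        _ = y * T := by rw [hTy]
    rw [sub_mul, mul_sub, hTy', Matrix.one_mul, Matrix.mul_one]
  -- As `(1 - T) u = 2 u`, the vector `y u = ½ (1 - T) (y u)` lies in the range `K u` of `1 - T`.
  have hyu : y *ᵥ u = (2⁻¹ * (v ⬝ᵥ y *ᵥ u)) • u := by
    have h := congrArg (· *ᵥ u) hcomm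
    simp only [← mulVec_mulVec, hT, vecMulVec_mulVec, op_smul_eq_smul, hvu, mulVec_smul] at h
    rw [mul_smul, h, smul_smul, inv_mul_cancel₀ two_ne_zero, one_smul]
  have hyu0 : y *ᵥ u = 0 := by
    rw [hyu, eq_zero_of_mulVec_eq_smul_of_isSkew hy hu hyu, zero_smul]
  have h := congrArg (y * ·) hT
  simp only [mul_vecMulVec, hyu0, zero_vecMulVec, mul_sub, Matrix.mul_one, sub_eq_zero] at h
  exact h.symm

end Reflection

end Matrix

theorem Module.End.exists_hasEigenvector_mem_of_mapsTo_s15 {K V : Type*} [Field K] [IsAlgClosed K]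
    [AddCommGroup V] [Module K V] [FiniteDimensional K V] (f : Module.End K V)
    {p : Submodule K V} (hp : p ≠ ⊥) (hfp : ∀ v ∈ p, f v ∈ p) :
    ∃ μ, ∃ v ∈ p, f.HasEigenvector μ v := by
  have : Nontrivial p := Submodule.nontrivial_iff_ne_bot.mpr hp
  obtain ⟨μ, hμ⟩ := Module.End.exists_eigenvalue (f.restrict hfp)
  obtain ⟨w, hw⟩ := hμ.exists_hasEigenvector
  refine ⟨μ, w, w.2, ?_⟩
  rw [hasEigenvector_iff, mem_eigenspace_iff] at hw ⊢
  exact ⟨congrArg Subtype.val hw.1, by simpa using hw.2⟩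

theorem one_sub_thetaMat_of_odd {n : ℕ} (hn : n % 2 = 1) {m : Fin n} (hm : 2 * (m : ℕ) + 1 = n) :
    1 - thetaMat n = vecMulVec (Pi.single m 1) (Pi.single m 2) := by
  ext i j
  simp only [thetaMat, hn, if_true, Matrix.sub_apply, one_apply, vecMulVec_apply, Pi.single_apply,
    Fin.ext_iff]
  split_ifs <;> first | omega | norm_num

theorem one_sub_thetaMat_of_even {n : ℕ} (hn : n % 2 = 0) {a b : Fin n}
    (ha : (a : ℕ) + 1 = n / 2) (hb : (b : ℕ) = n / 2) :
    1 - thetaMat n = vecMulVec (Pi.single a 1 - Pi.single b 1) (Pi.single a 1 - Pi.single b 1) := by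
  ext i j
  simp only [thetaMat, Matrix.sub_apply, one_apply, vecMulVec_apply, Pi.sub_apply, Pi.single_apply,
    Fin.ext_iff]
  split_ifs <;> first | omega | norm_num

theorem exists_one_sub_thetaMat_eq_vecMulVec {n : ℕ} (hn : n ≠ 0) :
    ∃ u v : Fin n → ℂ, 1 - thetaMat n = vecMulVec u v ∧ v ⬝ᵥ u = 2 ∧
      u ⬝ᵥ antidiagForm n *ᵥ u ≠ 0 := by
  rcases Nat.mod_two_eq_zero_or_one n with he | ho
  · refine ⟨_, _, one_sub_thetaMat_of_even he (a := ⟨n / 2 - 1, by omega⟩)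
      (b := ⟨n / 2, by omega⟩) (by simp only; omega) rfl, ?_, ?_⟩
    · simp only [dotProduct_sub, sub_dotProduct, single_dotProduct, Pi.single_apply, Fin.ext_iff]
      split_ifs <;> first | omega | norm_num
    · simp only [dotProduct_sub, sub_dotProduct, mulVec_sub, mulVec_single_one,
        single_dotProduct, col_apply, antidiagForm]
      split_ifs <;> first | omega | norm_num
  · refine ⟨_, _, one_sub_thetaMat_of_odd ho (m := ⟨n / 2, by omega⟩) (by simp only; omega), ?_, ?_⟩
    · simp
    · simp only [mulVec_single_one, single_dotProduct, col_apply, antidiagForm, one_mul]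
      rw [if_pos (by omega)]
      exact one_ne_zero

theorem kProj_mul_eq_mul {n : ℕ} {x y : Matrix (Fin n) (Fin n) ℂ} (hTy : thetaMat n * y = y)
    (hyx : y * x = x * y) : kProj n x * y = x * y := by
  have h : thetaMat n * x * thetaMat n * y = x * y := by
    rw [Matrix.mul_assoc, hTy, Matrix.mul_assoc, ← hyx, ← Matrix.mul_assoc, hTy, hyx]
  rw [kProj, Matrix.smul_mul, Matrix.add_mul, h, ← two_smul ℂ, smul_smul,
    inv_mul_cancel₀ two_ne_zero, one_smul]

theorem stmt15_general (n : ℕ) (x : Matrix (Fin n) (Fin n) ℂ)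
    (hcent : ∃ y : Matrix (Fin n) (Fin n) ℂ, y ≠ 0 ∧
      y.transpose * antidiagForm n + antidiagForm n * y = 0 ∧
      thetaMat n * y * thetaMat n = y ∧
      y * kProj n x = kProj n x * y ∧ y * x = x * y) :
    ∃ μ : ℂ, μ ∈ spectrum ℂ x ∧
      ∃ w : Fin n → ℂ, w ≠ 0 ∧ (thetaMat n).mulVec w = w ∧
        (kProj n x).mulVec w = μ • w := by
  obtain ⟨y, hy0, hy, hTyT, -, hyx⟩ := hcent
  have hn : n ≠ 0 := by
    rintro rfl
    exact hy0 (Subsingleton.elim _ _)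
  obtain ⟨u, v, hT, hvu, hu⟩ := exists_one_sub_thetaMat_eq_vecMulVec hn
  have hyT : y * thetaMat n = y := mul_eq_self_of_one_sub_eq_vecMulVec hT hvu hu hy hTyT
  have hTy : thetaMat n * y = y := by
    calc thetaMat n * y = thetaMat n * (y * thetaMat n) := by rw [hyT]
      _ = y := by rw [← Matrix.mul_assoc, hTyT]
  obtain ⟨μ, _, ⟨w, rfl⟩, hμ⟩ := Module.End.exists_hasEigenvector_mem_of_mapsTo_s15 (toLin' x)
    (p := LinearMap.range (toLin' y))
    (by rwa [Ne, LinearMap.range_eq_bot, LinearEquiv.map_eq_zero_iff])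
    (by rintro _ ⟨w, rfl⟩; exact ⟨x *ᵥ w, by simp [mulVec_mulVec, hyx]⟩)
  simp only [Module.End.hasEigenvector_iff, Module.End.mem_eigenspace_iff, toLin'_apply] at hμ
  refine ⟨μ, ?_, y *ᵥ w, hμ.2, ?_, ?_⟩
  · rw [← spectrum_toLin', ← Module.End.hasEigenvalue_iff_mem_spectrum]
    exact Module.End.hasEigenvalue_of_hasEigenvector (by simpa [Module.End.hasEigenvector_iff])
  · rw [mulVec_mulVec, hTy]
  · rw [mulVec_mulVec, kProj_mul_eq_mul hTy hyx, ← mulVec_mulVec, hμ.1]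

/-- **(Contrapositive of Theorem 4.13.)**  Let `x ∈ so(n,ℂ)` with projection
`x_k ∈ k = so(n-1,ℂ)`.  If the centralizer of `x_k` in `k` intersects the
centralizer of `x` in `so(n,ℂ)` nontrivially, then `x` and `x_k` share a common
eigenvalue, where `x_k` is regarded as acting on the `(n-1)`-dimensional `θ`-fixed
subspace of `ℂⁿ`. -/
theorem stmt15 (n : ℕ) (x : Matrix (Fin n) (Fin n) ℂ)
    (hx : x.transpose * antidiagForm n + antidiagForm n * x = 0)
    (hcent : ∃ y : Matrix (Fin n) (Fin n) ℂ, y ≠ 0 ∧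
      y.transpose * antidiagForm n + antidiagForm n * y = 0 ∧
      thetaMat n * y * thetaMat n = y ∧
      y * kProj n x = kProj n x * y ∧ y * x = x * y) :
    ∃ μ : ℂ, μ ∈ spectrum ℂ x ∧
      ∃ w : Fin n → ℂ, w ≠ 0 ∧ (thetaMat n).mulVec w = w ∧
        (kProj n x).mulVec w = μ • w :=
  stmt15_general n x hcent
end
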